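/- Let Ω be a type, n a natural number, E a type of events with supports S : E → Set (Fin n) and update maps U : E → ((Fin n → Set Ω) → (Fin n → Set Ω)), and let R⁰ : Fin n → Set Ω be an initial state. Assume the diamond property at reachable states: for every reachable state R and all events e, f with disjoint supports, U e (U f R) = U f (U e R). Define the one-step swap relation on lists of events: l₁ ∼ l₂ iff there exist lists xs, ys and events e, f with disjoint supports such that l₁ = xs ++ e :: f :: ys and l₂ = xs ++ f :: e :: ys. Then for any two lists l₁, l₂ related by the equivalence closure Relation.EqvGen (∼) of the swap relation (i.e. l₁ and l₂ are trace-equivalent schedules), executing l₁ from R⁰ and executing l₂ from R⁰ yield the same final record state. -/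

import Mathlib

/-- Executing a list of events from an initial state: left fold of their update maps. -/
def exec {Ω E : Type*} {n : ℕ} (U : E → (Fin n → Set Ω) → (Fin n → Set Ω))
    (R0 : Fin n → Set Ω) (l : List E) : Fin n → Set Ω := l.foldl (fun R e => U e R) R0

/-- A state is reachable if it arises by executing some finite list of events from `R0`. -/
def Reachable {Ω E : Type*} {n : ℕ} (U : E → (Fin n → Set Ω) → (Fin n → Set Ω))
    (R0 : Fin n → Set Ω) (R : Fin n → Set Ω) : Prop := ∃ l : List E, R = exec U R0 l

/-- One-step swap of two adjacent independent events in a schedule. -/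
def Swap {E : Type*} {n : ℕ} (S : E → Set (Fin n)) (l₁ l₂ : List E) : Prop :=
  ∃ (xs ys : List E) (e f : E), Disjoint (S e) (S f) ∧
    l₁ = xs ++ e :: f :: ys ∧ l₂ = xs ++ f :: e :: ys

/-!
Executing `xs ++ e :: f :: ys` passes through the reachable state `exec U R0 xs`, where the
diamond property lets `e` and `f` commute; afterwards both schedules run `ys` from the same
state. So `exec U R0` is constant on swap-related schedules, hence it factors through the
quotient by the generated equivalence relation.
-/

section

variable {Ω E : Type*} {n : ℕ} (U : E → (Fin n → Set Ω) → (Fin n → Set Ω)) (R0 : Fin n → Set Ω)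

theorem exec_append (xs ys : List E) : exec U R0 (xs ++ ys) = exec U (exec U R0 xs) ys :=
  List.foldl_append

theorem exec_eq_of_swap (S : E → Set (Fin n))
    (diamond : ∀ R : Fin n → Set Ω, Reachable U R0 R → ∀ e f : E,
      Disjoint (S e) (S f) → U e (U f R) = U f (U e R))
    {l₁ l₂ : List E} (h : Swap S l₁ l₂) : exec U R0 l₁ = exec U R0 l₂ := by
  obtain ⟨xs, ys, e, f, hef, rfl, rfl⟩ := h
  have hcomm := diamond (exec U R0 xs) ⟨xs, rfl⟩ f e hef.symm
  rw [exec_append, exec_append]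
  exact congrArg (exec U · ys) hcomm

end

/-- Trace invariance: under the diamond property at reachable states, trace-equivalent
schedules (related by the equivalence closure of adjacent independent swaps) produce
the same final record state. -/
theorem trace_invariance {Ω E : Type*} {n : ℕ}
    (S : E → Set (Fin n)) (U : E → (Fin n → Set Ω) → (Fin n → Set Ω))
    (R0 : Fin n → Set Ω)
    (diamond : ∀ R : Fin n → Set Ω, Reachable U R0 R → ∀ e f : E,
      Disjoint (S e) (S f) → U e (U f R) = U f (U e R)) :
    ∀ l₁ l₂ : List E, Relation.EqvGen (Swap S) l₁ l₂ →
      exec U R0 l₁ = exec U R0 l₂ := fun _ _ h =>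
  congrArg (Quot.lift (exec U R0) fun _ _ => exec_eq_of_swap U R0 S diamond)
    (Quot.eqvGen_sound h)
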